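/- arXiv:1101.6069 — 2 statements merged into one kernel-verified Lean document; each statement's English description precedes it below -/
import Mathlib

section
/- If Δ₁ + Δ₂ ≥ 4U, then H(η) ≥ 0 for every configuration η : Λ → {0,1,2}; in particular, the empty configuration □ is a global minimum of the Hamiltonian H. -/
open Finset
open scoped Classical

/-- Nearest-neighbor adjacency on ℤ² (Euclidean distance 1). -/
def adj (x y : ℤ × ℤ) : Prop := |x.1 - y.1| + |x.2 - y.2| = 1

instance : DecidableRel adj := fun x y => by unfold adj; infer_instance

/-- Internal boundary ∂⁻Λ = {x ∈ Λ : ∃ y ∉ Λ, |x−y| = 1}. -/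
noncomputable def intBdry (Λ : Finset (ℤ × ℤ)) : Finset (ℤ × ℤ) :=
  Λ.filter fun x => ∃ y, y ∉ Λ ∧ adj x y

/-- Λ⁻ = Λ ∖ ∂⁻Λ. -/
noncomputable def lamMinus (Λ : Finset (ℤ × ℤ)) : Finset (ℤ × ℤ) := Λ \ intBdry Λ

/-- Number of particles of type `i` in `η` (inside Λ). -/
def nPart (Λ : Finset (ℤ × ℤ)) (η : ℤ × ℤ → Fin 3) (i : Fin 3) : ℕ :=
  (Λ.filter fun x => η x = i).card

/-- Twice the number of active bonds: ordered pairs (x,y), x,y ∈ Λ⁻, |x−y| = 1,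
    η(x)·η(y) = 2. -/
noncomputable def bondCount (Λ : Finset (ℤ × ℤ)) (η : ℤ × ℤ → Fin 3) : ℕ :=
  (((lamMinus Λ) ×ˢ (lamMinus Λ)).filter
    fun p => adj p.1 p.2 ∧ (η p.1 : ℕ) * (η p.2 : ℕ) = 2).card

/-- B(η): number of unordered active bonds. -/
noncomputable def activeBonds (Λ : Finset (ℤ × ℤ)) (η : ℤ × ℤ → Fin 3) : ℕ :=
  bondCount Λ η / 2

/-- Hamiltonian H(η) = Δ₁ n₁(η) + Δ₂ n₂(η) − U B(η). -/
noncomputable def ham (U Δ₁ Δ₂ : ℝ) (Λ : Finset (ℤ × ℤ)) (η : ℤ × ℤ → Fin 3) : ℝ :=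
  Δ₁ * (nPart Λ η 1 : ℝ) + Δ₂ * (nPart Λ η 2 : ℝ) - U * (activeBonds Λ η : ℝ)

/-!
Every active bond joins a particle of type 1 to one of type 2, and a site of ℤ² has only four
neighbours, so `B ≤ 4 n₁` and `B ≤ 4 n₂`. Averaging these two bounds with weights `Δ₁, Δ₂` gives
`(Δ₁ + Δ₂) B ≤ 4 (Δ₁ n₁ + Δ₂ n₂)`, hence `U B ≤ Δ₁ n₁ + Δ₂ n₂` whenever `4 U ≤ Δ₁ + Δ₂`.
-/

def unitSteps : Finset (ℤ × ℤ) := {(1, 0), (-1, 0), (0, 1), (0, -1)}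

lemma adj_comm {x y : ℤ × ℤ} : adj x y ↔ adj y x := by
  simp only [adj, abs_sub_comm x.1, abs_sub_comm x.2]

lemma sub_mem_unitSteps_of_adj {x y : ℤ × ℤ} (h : adj x y) : y - x ∈ unitSteps := by
  have h' : (x.1 - y.1).natAbs + (x.2 - y.2).natAbs = 1 := by
    unfold adj at h
    rw [Int.abs_eq_natAbs, Int.abs_eq_natAbs] at h
    exact_mod_cast h
  simp only [unitSteps, mem_insert, mem_singleton, Prod.ext_iff, Prod.fst_sub, Prod.snd_sub]
  omega

lemma card_filter_fst_mem_le {P : Finset ((ℤ × ℤ) × (ℤ × ℤ))} (hP : ∀ p ∈ P, adj p.1 p.2)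
    (A : Finset (ℤ × ℤ)) : #(P.filter (·.1 ∈ A)) ≤ 4 * #A := by
  calc #(P.filter (·.1 ∈ A)) ≤ #(A ×ˢ unitSteps) := by
        refine card_le_card_of_injOn (fun p => (p.1, p.2 - p.1)) (fun p hp => ?_) ?_
        · rw [coe_filter] at hp
          exact mem_product.2 ⟨hp.2, sub_mem_unitSteps_of_adj (hP p hp.1)⟩
        · intro p _ q _ h
          simp only [Prod.ext_iff, Prod.fst_sub, Prod.snd_sub] at h ⊢
          omega
    _ = 4 * #A := by rw [card_product, mul_comm]; rfl

lemma card_le_eight_mul_of_adj {P : Finset ((ℤ × ℤ) × (ℤ × ℤ))} (hP : ∀ p ∈ P, adj p.1 p.2)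
    {A : Finset (ℤ × ℤ)} (hA : ∀ p ∈ P, p.1 ∈ A ∨ p.2 ∈ A) : #P ≤ 8 * #A := by
  set Q := P.map (Equiv.prodComm _ _).toEmbedding
  have hQ : ∀ q ∈ Q, adj q.1 q.2 := by
    simp only [Q, mem_map_equiv]
    exact fun q hq => adj_comm.1 (hP _ hq)
  have hswap : #(P.filter (·.2 ∈ A)) = #(Q.filter (·.1 ∈ A)) := by
    rw [filter_map, card_map]
    rfl
  calc #P ≤ #(P.filter (·.1 ∈ A) ∪ P.filter (·.2 ∈ A)) :=
        card_le_card fun p hp => by simpa [mem_union, mem_filter, hp] using hA p hp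
    _ ≤ #(P.filter (·.1 ∈ A)) + #(Q.filter (·.1 ∈ A)) := hswap ▸ card_union_le _ _
    _ ≤ 4 * #A + 4 * #A :=
        Nat.add_le_add (card_filter_fst_mem_le hP A) (card_filter_fst_mem_le hQ A)
    _ = 8 * #A := by ring

lemma eq_or_eq_of_val_mul_val_eq_two {a b i : Fin 3} (h : (a : ℕ) * b = 2) (hi : i ≠ 0) :
    a = i ∨ b = i := by
  revert a b i
  decide

lemma activeBonds_le_four_mul_nPart (Λ : Finset (ℤ × ℤ)) (η : ℤ × ℤ → Fin 3) {i : Fin 3}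
    (hi : i ≠ 0) : activeBonds Λ η ≤ 4 * nPart Λ η i := by
  have hbond : bondCount Λ η ≤ 8 * nPart Λ η i := by
    refine card_le_eight_mul_of_adj (fun p hp => (mem_filter.1 hp).2.1) fun p hp => ?_
    obtain ⟨hmem, -, hprod⟩ := mem_filter.1 hp
    obtain ⟨h₁, h₂⟩ := mem_product.1 hmem
    have hΛ := fun x (hx : x ∈ lamMinus Λ) => (mem_sdiff.1 hx).1
    rcases eq_or_eq_of_val_mul_val_eq_two hprod hi with h | h
    · exact Or.inl (mem_filter.2 ⟨hΛ _ h₁, h⟩)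
    · exact Or.inr (mem_filter.2 ⟨hΛ _ h₂, h⟩)
  unfold activeBonds
  omega

theorem ham_nonneg {U Δ₁ Δ₂ : ℝ} (hΔ₁ : 0 ≤ Δ₁) (hΔ₂ : 0 ≤ Δ₂) (h : 4 * U ≤ Δ₁ + Δ₂)
    (Λ : Finset (ℤ × ℤ)) (η : ℤ × ℤ → Fin 3) : 0 ≤ ham U Δ₁ Δ₂ Λ η := by
  have hquarter {i : Fin 3} (hi : i ≠ 0) : (activeBonds Λ η : ℝ) / 4 ≤ nPart Λ η i := by
    rw [div_le_iff₀ four_pos]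
    exact_mod_cast (activeBonds_le_four_mul_nPart Λ η hi).trans_eq (mul_comm _ _)
  have : U * activeBonds Λ η ≤ Δ₁ * nPart Λ η 1 + Δ₂ * nPart Λ η 2 :=
    calc U * activeBonds Λ η ≤ (Δ₁ + Δ₂) / 4 * activeBonds Λ η := by gcongr; linarith
      _ = Δ₁ * (activeBonds Λ η / 4) + Δ₂ * (activeBonds Λ η / 4) := by ring
      _ ≤ Δ₁ * nPart Λ η 1 + Δ₂ * nPart Λ η 2 := by
        gcongr <;> exact hquarter (by decide)
  unfold ham
  linarith

lemma ham_empty (U Δ₁ Δ₂ : ℝ) (Λ : Finset (ℤ × ℤ)) : ham U Δ₁ Δ₂ Λ (fun _ => 0) = 0 := by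
  simp [ham, nPart, activeBonds, bondCount]

theorem stmt_0_general (U Δ₁ Δ₂ : ℝ) (hΔ₁ : 0 < Δ₁) (hΔ₂ : 0 < Δ₂)
    (Λ : Finset (ℤ × ℤ)) (h4U : Δ₁ + Δ₂ ≥ 4 * U) :
    (∀ η : ℤ × ℤ → Fin 3, 0 ≤ ham U Δ₁ Δ₂ Λ η) ∧
    (∀ η : ℤ × ℤ → Fin 3, ham U Δ₁ Δ₂ Λ (fun _ => 0) ≤ ham U Δ₁ Δ₂ Λ η) := by
  have hnonneg := ham_nonneg hΔ₁.le hΔ₂.le h4U Λ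
  exact ⟨hnonneg, fun η => (ham_empty U Δ₁ Δ₂ Λ).symm ▸ hnonneg η⟩

/-- If Δ₁ + Δ₂ ≥ 4U, then H(η) ≥ 0 for every configuration η;
in particular the empty configuration □ is a global minimum of H. -/
theorem stmt_0 (U Δ₁ Δ₂ : ℝ) (hU : 0 < U) (hΔ₁ : 0 < Δ₁) (hΔ₂ : 0 < Δ₂)
    (hΔ : Δ₁ ≤ Δ₂) (Λ : Finset (ℤ × ℤ)) (h4U : Δ₁ + Δ₂ ≥ 4 * U) :
    (∀ η : ℤ × ℤ → Fin 3, 0 ≤ ham U Δ₁ Δ₂ Λ η) ∧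
    (∀ η : ℤ × ℤ → Fin 3, ham U Δ₁ Δ₂ Λ (fun _ => 0) ≤ ham U Δ₁ Δ₂ Λ η) :=
  stmt_0_general U Δ₁ Δ₂ hΔ₁ hΔ₂ Λ h4U
end

section
/- Assume hypotheses (H1) and (H2). Then the stability level of □ equals Γ*, i.e. Φ(□, I_□) − H(□) = Γ*. -/
open scoped Classical

variable {X : Type*}

/-- `ω` (restricted to 0,…,L) is a path of allowed moves from `a` to `b`. -/
def IsPathW (rel : X → X → Prop) (a b : X) (L : ℕ) (ω : ℕ → X) : Prop :=
  ω 0 = a ∧ ω L = b ∧ ∀ i < L, rel (ω i) (ω (i + 1))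

/-- The maximal energy along the path `ω = (ω 0, …, ω L)`. -/
noncomputable def pathMax (H : X → ℝ) (L : ℕ) (ω : ℕ → X) : ℝ :=
  (Finset.range (L + 1)).sup' Finset.nonempty_range_add_one fun i => H (ω i)

/-- Communication height Φ(a,b) between two configurations. -/
noncomputable def commH (rel : X → X → Prop) (H : X → ℝ) (a b : X) : ℝ :=
  sInf { m : ℝ | ∃ L ω, IsPathW rel a b L ω ∧ m = pathMax H L ω }

/-- Communication height Φ(A,B) between two sets of configurations. -/
noncomputable def commHS (rel : X → X → Prop) (H : X → ℝ) (A B : Set X) : ℝ :=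
  sInf { m : ℝ | ∃ a ∈ A, ∃ b ∈ B, m = commH rel H a b }

/-- The graph (X,∼) is connected. -/
def ConnGraph (rel : X → X → Prop) : Prop :=
  ∀ a b : X, ∃ L ω, IsPathW rel a b L ω

/-!
Below `□` every configuration other than `⊞` can descend to a lower one at cost at most `V*`,
so by well-founded induction on the energy each such `ξ` reaches `⊞` at height at most
`H ξ + V* < Φ(□, ⊞)`.
Hence an optimal path from `□` to its lower set `I_□` that ends at `ξ ≠ ⊞` extends to a path
from `□` to `⊞` without raising the maximum above `Φ(□, I_□)`, while `⊞ ∈ I_□` gives the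
other inequality.
-/

section Paths

variable {rel : X → X → Prop} {H : X → ℝ}

lemma le_pathMax {L i : ℕ} (ω : ℕ → X) (hi : i ≤ L) : H (ω i) ≤ pathMax H L ω :=
  Finset.le_sup' (fun i => H (ω i)) (Finset.mem_range.2 (Nat.lt_succ_of_le hi))

lemma pathMax_mem_range (L : ℕ) (ω : ℕ → X) : pathMax H L ω ∈ Set.range H := by
  obtain ⟨i, -, hi⟩ := Finset.exists_mem_eq_sup' Finset.nonempty_range_add_one fun i => H (ω i)
  exact ⟨ω i, hi.symm⟩

lemma IsPathW.append {a b c : X} {L₁ L₂ : ℕ} {ω₁ ω₂ : ℕ → X}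
    (h₁ : IsPathW rel a b L₁ ω₁) (h₂ : IsPathW rel b c L₂ ω₂) :
    ∃ ω, IsPathW rel a c (L₁ + L₂) ω ∧
      pathMax H (L₁ + L₂) ω ≤ max (pathMax H L₁ ω₁) (pathMax H L₂ ω₂) := by
  obtain ⟨h₁0, h₁L, h₁s⟩ := h₁
  obtain ⟨h₂0, h₂L, h₂s⟩ := h₂
  have junction : ω₂ 0 = ω₁ L₁ := h₂0.trans h₁L.symm
  refine ⟨fun i => if i < L₁ then ω₁ i else ω₂ (i - L₁), ⟨?_, ?_, ?_⟩, ?_⟩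
  · rcases Nat.eq_zero_or_pos L₁ with hL | hL
    · subst hL; simpa [junction] using h₁0
    · simpa [hL] using h₁0
  · simpa using h₂L
  · intro i hi
    by_cases hi₁ : i + 1 < L₁
    · simpa [hi₁, show i < L₁ by omega] using h₁s i (by omega)
    by_cases hi₀ : i < L₁
    · have hL : i + 1 = L₁ := by omega
      simpa [hi₀, hL, junction] using h₁s i hi₀
    · simpa [hi₀, hi₁, show i + 1 - L₁ = i - L₁ + 1 by omega] using h₂s (i - L₁) (by omega)
  · refine Finset.sup'_le _ _ fun i hi => ?_
    rw [Finset.mem_range] at hi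
    dsimp only
    split_ifs with h
    · exact (le_pathMax ω₁ h.le).trans (le_max_left _ _)
    · exact (le_pathMax ω₂ (by omega)).trans (le_max_right _ _)

end Paths

section CommunicationHeight

variable {rel : X → X → Prop} {H : X → ℝ} [Finite X]

lemma finite_pathMax_setOf (a b : X) :
    {m : ℝ | ∃ L ω, IsPathW rel a b L ω ∧ m = pathMax H L ω}.Finite :=
  (Set.finite_range H).subset (by rintro m ⟨L, ω, -, rfl⟩; exact pathMax_mem_range L ω)

lemma commH_le_pathMax {a b : X} {L : ℕ} {ω : ℕ → X} (h : IsPathW rel a b L ω) :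
    commH rel H a b ≤ pathMax H L ω :=
  csInf_le (finite_pathMax_setOf a b).bddBelow ⟨L, ω, h, rfl⟩

lemma exists_isPathW_commH_eq (hconn : ConnGraph rel) (a b : X) :
    ∃ L ω, IsPathW rel a b L ω ∧ commH rel H a b = pathMax H L ω := by
  obtain ⟨L, ω, h⟩ := hconn a b
  exact Set.Nonempty.csInf_mem (s := {m : ℝ | ∃ L ω, IsPathW rel a b L ω ∧ m = pathMax H L ω})
    ⟨_, L, ω, h, rfl⟩ (finite_pathMax_setOf a b)

lemma commH_le_max (hconn : ConnGraph rel) (a b c : X) :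
    commH rel H a c ≤ max (commH rel H a b) (commH rel H b c) := by
  obtain ⟨L₁, ω₁, h₁, e₁⟩ := exists_isPathW_commH_eq (H := H) hconn a b
  obtain ⟨L₂, ω₂, h₂, e₂⟩ := exists_isPathW_commH_eq (H := H) hconn b c
  obtain ⟨ω, hω, hle⟩ := h₁.append (H := H) h₂
  rw [e₁, e₂]
  exact (commH_le_pathMax hω).trans hle

lemma finite_commH_setOf (A B : Set X) :
    {m : ℝ | ∃ a ∈ A, ∃ b ∈ B, m = commH rel H a b}.Finite :=
  (Set.finite_range fun p : X × X => commH rel H p.1 p.2).subset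
    (by rintro m ⟨a, -, b, -, rfl⟩; exact ⟨(a, b), rfl⟩)

lemma commHS_le_commH {A B : Set X} {a b : X} (ha : a ∈ A) (hb : b ∈ B) :
    commHS rel H A B ≤ commH rel H a b :=
  csInf_le (finite_commH_setOf A B).bddBelow ⟨a, ha, b, hb, rfl⟩

lemma exists_commHS_singleton_eq (a : X) {B : Set X} (hB : B.Nonempty) :
    ∃ b ∈ B, commHS rel H {a} B = commH rel H a b := by
  obtain ⟨b, hb⟩ := hB
  obtain ⟨a', rfl, b', hb', h⟩ :=
    Set.Nonempty.csInf_mem (s := {m : ℝ | ∃ a' ∈ ({a} : Set X), ∃ b ∈ B, m = commH rel H a' b})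
      ⟨_, a, rfl, b, hb, rfl⟩ (finite_commH_setOf {a} B)
  exact ⟨b', hb', h⟩

lemma commH_le_add_of_stabilityLevel_le (hconn : ConnGraph rel) {m : X}
    (hm : ∀ η, η ≠ m → H m < H η) {c V : ℝ}
    (hV : ∀ η, η ≠ m → H η < c → commHS rel H {η} {ξ | H ξ < H η} - H η ≤ V) :
    ∀ η, η ≠ m → H η < c → commH rel H η m ≤ H η + V := by
  have wf : WellFounded (InvImage (· < ·) H) := Finite.wellFounded_of_trans_of_irrefl _
  intro η
  induction η using wf.induction with
  | _ η ih =>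
    intro hηm hηc
    obtain ⟨ξ, hξη, hξ⟩ := exists_commHS_singleton_eq (rel := rel) η
      (B := {ξ | H ξ < H η}) ⟨m, hm η hηm⟩
    have step : commH rel H η ξ ≤ H η + V := by linarith [hV η hηm hηc]
    by_cases hξm : ξ = m
    · rwa [← hξm]
    have rest : commH rel H ξ m ≤ H η + V := by
      linarith [ih ξ hξη hξm (hξη.trans hηc), show H ξ < H η from hξη]
    exact (commH_le_max hconn η ξ m).trans (max_le step rest)

end CommunicationHeight

lemma lt_of_setOf_forall_le_eq_singleton {H : X → ℝ} {m : X}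
    (hm : {η : X | ∀ ξ, H η ≤ H ξ} = {m}) {η : X} (hη : η ≠ m) : H m < H η := by
  have hmin : ∀ ξ, H m ≤ H ξ := (hm.symm ▸ rfl : m ∈ {η : X | ∀ ξ, H η ≤ H ξ})
  by_contra! hle
  exact hη (hm ▸ fun ξ => hle.trans (hmin ξ) : η ∈ ({m} : Set X))

theorem stmt_7_general [Fintype X] (rel : X → X → Prop) (H : X → ℝ)
    (hconn : ConnGraph rel)
    (sq bx : X) (hne : sq ≠ bx)
    -- (H1): X_stab = {⊞}
    (hH1 : {η : X | ∀ ξ, H η ≤ H ξ} = {bx})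
    -- (H2): ∃ V* < Γ* with V_η ≤ V* for all η ∉ {□,⊞}
    (hH2 : ∃ Vs : ℝ, Vs < commH rel H sq bx - H sq ∧
      ∀ η : X, η ≠ sq → η ≠ bx →
        ({ξ : X | H ξ < H η}).Nonempty ∧
        commHS rel H {η} {ξ : X | H ξ < H η} - H η ≤ Vs) :
    commHS rel H {sq} {ξ : X | H ξ < H sq} - H sq = commH rel H sq bx - H sq := by
  obtain ⟨Vs, hVs, hstab⟩ := hH2
  have hmin : ∀ η, η ≠ bx → H bx < H η := fun η => lt_of_setOf_forall_le_eq_singleton hH1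
  have descent := commH_le_add_of_stabilityLevel_le hconn hmin (c := H sq)
    fun η hηbx hηsq => (hstab η (by rintro rfl; exact hηsq.false) hηbx).2
  have hbx : bx ∈ {ξ | H ξ < H sq} := hmin sq hne
  obtain ⟨ξ, hξ, hξeq⟩ := exists_commHS_singleton_eq (rel := rel) sq ⟨bx, hbx⟩
  suffices commH rel H sq bx ≤ commH rel H sq ξ by
    linarith [commHS_le_commH (rel := rel) (H := H) (Set.mem_singleton sq) hbx]
  by_cases hξbx : ξ = bx
  · rw [hξbx]
  have below : commH rel H ξ bx < commH rel H sq bx := by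
    linarith [descent ξ hξbx hξ, show H ξ < H sq from hξ]
  exact (le_max_iff.1 (commH_le_max hconn sq ξ bx)).resolve_right below.not_ge

/-- under (H1)–(H2), the stability level of □ equals Γ*, i.e.
Φ(□, I_□) − H(□) = Γ* = Φ(□,⊞) − H(□). -/
theorem stmt_7 [Fintype X] (rel : X → X → Prop) (H : X → ℝ)
    (hsymm : Symmetric rel) (hconn : ConnGraph rel)
    (sq bx : X) (hne : sq ≠ bx) (Hsq : H sq = 0)
    -- (H1): X_stab = {⊞}
    (hH1 : {η : X | ∀ ξ, H η ≤ H ξ} = {bx})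
    -- (H2): ∃ V* < Γ* with V_η ≤ V* for all η ∉ {□,⊞}
    (hH2 : ∃ Vs : ℝ, Vs < commH rel H sq bx - H sq ∧
      ∀ η : X, η ≠ sq → η ≠ bx →
        ({ξ : X | H ξ < H η}).Nonempty ∧
        commHS rel H {η} {ξ : X | H ξ < H η} - H η ≤ Vs) :
    commHS rel H {sq} {ξ : X | H ξ < H sq} - H sq = commH rel H sq bx - H sq :=
  stmt_7_general rel H hconn sq bx hne hH1 hH2
end
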